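/- arXiv:math/0602331 — 2 statements merged into one kernel-verified Lean document; each statement's English description precedes it below -/
import Mathlib

section
/- Let M̄ = I ×_φ F be a generalized Robertson–Walker spacetime and x : M → M̄ a closed strongly stable spacelike hypersurface with constant mean curvature H. If φ″ ≥ max{Hφ′, 0} along M, then at every point of M either cosh θ = 1 (where cosh θ = −⟨N, ∂/∂t⟩) or φ″ = 0, and moreover φ″ = Hφ′ holds identically on M. -/
open MeasureTheory

/-!
STATEMENT 14: Let `x : M → I ×_φ F` be a closed strongly stable spacelike
hypersurface with constant mean curvature `H`, with `φ″ ≥ max{Hφ′, 0}` along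
`M`.  Then at every point either `cosh θ = 1` (where `cosh θ = −⟨N,∂/∂t⟩`)
or `φ″ = 0`; moreover `φ″ = Hφ′` identically on `M`.

`μ` is the Riemannian volume measure of `M` (finite since `M` is compact,
positive on open sets), `NT = ⟨N, ∂/∂t⟩ ≤ −1` (reversed Cauchy–Schwarz for
the future-pointing timelike unit vectors `N` and `∂/∂t`), `φM, φ'M, φ''M`
are `φ, φ′, φ″` along `M`.  Strong stability is applied to the admissible
function `g = −φ⟨N, ∂/∂t⟩`, whose Laplacian is given by Statement 10.
-/
theorem stmt_14 {M : Type*} [TopologicalSpace M] [CompactSpace M]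
    [MeasurableSpace M] [BorelSpace M]
    (μ : Measure M) [IsFiniteMeasure μ] [μ.IsOpenPosMeasure]
    (n : ℕ) (hn : 0 < n) (H : ℝ)
    (φM φ'M φ''M NT RicNN A2 : M → ℝ)
    (hφpos : ∀ p, 0 < φM p)
    (hcosh : ∀ p, NT p ≤ -1)                         -- cosh θ = −⟨N,∂t⟩ ≥ 1
    (hconv : ∀ p, φ''M p ≥ max (H * φ'M p) 0)        -- φ″ ≥ max{Hφ′, 0}
    (hcont : Continuous fun p =>
      φM p * (-NT p) * (-(H * φ'M p) + φ''M p * (-NT p)))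
    (lap : (M → ℝ) → M → ℝ)
    (g : M → ℝ) (hg : ∀ p, g p = -(φM p * NT p))     -- g = −φ⟨N,∂/∂t⟩
    -- Laplacian formula (Statement 10) for g = −f :
    (hlapg : ∀ p, lap g p = (RicNN p + A2 p) * g p
        - n * (H * φ'M p + φ''M p * NT p))
    -- strong stability, applied to the admissible function g :
    (hstable : ∫ p, g p * (lap g p - (RicNN p + A2 p) * g p) ∂μ ≤ 0) :
    (∀ p, -NT p = 1 ∨ φ''M p = 0) ∧ (∀ p, φ''M p = H * φ'M p) := by
  set f : M → ℝ := fun p => φM p * (-NT p) * (-(H * φ'M p) + φ''M p * (-NT p)) with hf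
  have h1 : ∀ p, (1:ℝ) ≤ -NT p := fun p => by linarith [hcosh p]
  have h2 : ∀ p, 0 ≤ φ''M p := fun p => le_trans (le_max_right _ _) (hconv p)
  have h3 : ∀ p, H * φ'M p ≤ φ''M p := fun p => le_trans (le_max_left _ _) (hconv p)
  have hkey : ∀ p, 0 ≤ -(H * φ'M p) + φ''M p * (-NT p) := by
    intro p
    nlinarith [h1 p, h2 p, h3 p]
  have hfnn : (0 : M → ℝ) ≤ f := by
    intro p
    have hφ : 0 ≤ φM p * (-NT p) := by nlinarith [hφpos p, h1 p]
    exact mul_nonneg hφ (hkey p)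
  have hint : Integrable f μ := by
    rw [← MeasureTheory.integrableOn_univ]
    exact hcont.locallyIntegrable.integrableOn_isCompact isCompact_univ
  have hEq : (fun p => g p * (lap g p - (RicNN p + A2 p) * g p)) = fun p => (n : ℝ) * f p := by
    funext p
    rw [hlapg p, hg p]
    simp only [hf]
    ring
  rw [hEq, integral_const_mul] at hstable
  have hn' : (0:ℝ) < n := by exact_mod_cast hn
  have hile : ∫ p, f p ∂μ ≤ 0 := nonpos_of_mul_nonpos_right hstable hn'
  have hizero : ∫ p, f p ∂μ = 0 :=
    le_antisymm hile (integral_nonneg hfnn)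
  have hae : f =ᵐ[μ] 0 := (integral_eq_zero_iff_of_nonneg hfnn hint).mp hizero
  have hzero : f = 0 := (hcont.ae_eq_iff_eq μ continuous_const).mp hae
  have hptw : ∀ p, -(H * φ'M p) + φ''M p * (-NT p) = 0 := by
    intro p
    have hfp : f p = 0 := congrFun hzero p
    have hφ : 0 < φM p * (-NT p) := by nlinarith [hφpos p, h1 p]
    have := mul_eq_zero.mp hfp
    rcases this with h | h
    · exact absurd h hφ.ne'
    · exact h
  constructor
  · intro p
    have hp := hptw p
    by_cases hz : φ''M p = 0
    · exact Or.inr hz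
    · left
      have hz' : 0 < φ''M p := lt_of_le_of_ne (h2 p) (Ne.symm hz)
      -- H φ' = φ'' (-NT) ≥ φ'' ≥ H φ', so φ'' (-NT) = φ'' hence -NT = 1
      nlinarith [h1 p, h3 p]
  · intro p
    have hp := hptw p
    by_cases hz : φ''M p = 0
    · have : H * φ'M p = 0 := by rw [hz] at hp; linarith
      rw [hz, this]
    · have hz' : 0 < φ''M p := lt_of_le_of_ne (h2 p) (Ne.symm hz)
      nlinarith [h1 p, h3 p]
end

section
/- Let φ : I → ℝ be smooth positive on an open interval and suppose φ″(t₀) = 0, φ″(t) ≥ max{Hφ′(t), 0} for all t, and φ″ = Hφ′ identically, where H ≠ 0. If additionally φ′(t₀) = 0 forces total geodesy (A ≡ 0) at a point of a hypersurface with mean curvature H, then one obtains a contradiction; i.e., under the paper's hypotheses, φ″(p) = 0 at some point of a non-minimal CMC strongly stable hypersurface is impossible. -/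
/-!
STATEMENT 16: (Case analysis in the main theorem.)  Suppose `H ≠ 0` is the
constant mean curvature of a strongly stable CMC hypersurface on which
`φ″ = Hφ′` identically and `φ″ ≥ max{Hφ′, 0}`; if `φ′(p) = 0` forces total
geodesy (`A = 0`) at `p`, then `φ″(p) = 0` is impossible at every point.

`A p` is the shape operator at `p` (an endomorphism of a model tangent space
`T` of dimension `n`), with `H = −(1/n) tr (A p)`; `φ'M, φ''M` are `φ′, φ″`
along the hypersurface `M`.
-/
theorem stmt_16 {M T : Type*} [AddCommGroup T] [Module ℝ T]
    [FiniteDimensional ℝ T]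
    (n : ℕ) (hn : 0 < n) (hdim : Module.finrank ℝ T = n)
    (H : ℝ) (hH : H ≠ 0)
    (φ'M φ''M : M → ℝ)
    (hconv : ∀ p, φ''M p ≥ max (H * φ'M p) 0)
    (heq : ∀ p, φ''M p = H * φ'M p)            -- φ″ = Hφ′ on M (from stability)
    (A : M → T →ₗ[ℝ] T)                        -- shape operator along M
    (htrace : ∀ p, H = -(1 / (n : ℝ)) * LinearMap.trace ℝ T (A p))
    -- φ′(p) = 0 makes ∂/∂t parallel at p, forcing total geodesy at p :
    (hgeo : ∀ p, φ'M p = 0 → A p = 0) :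
    ∀ p, φ''M p ≠ 0 := by
  intro p h0
  have hphi' : φ'M p = 0 := by
    have := heq p
    rw [h0] at this
    exact (mul_eq_zero.mp this.symm).resolve_left hH
  have hA := hgeo p hphi'
  have := htrace p
  rw [hA, map_zero, mul_zero] at this
  exact hH this
end
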